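/- Let R be either β or βη and fix a λ-term F. Let Υ'_F = { Θ' F' : Θ →→_R Θ', F →→_R F' }, where Θ is Turing's fixed point combinator. If M ∈ Υ'_F and M →_R M', then M' = (F')^{(n)} N for some λ-term F' with F →→_R F', some N ∈ Υ'_F, and some n ≥ 0. -/

import Mathlib

/-!
Lambda terms over a variable type `V`, intrinsically taken up to
α-equivalence, via the nested-datatype ("presheaf" / well-scoped de Bruijn)
representation: the body of a λ-abstraction is a term over `Option V`,
the bound variable being `none`.
-/

/-- λ-terms over a variable type, up to α-equivalence. -/
inductive Term : Type u → Type (u + 1)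
  | var {V : Type u} : V → Term V
  | app {V : Type u} : Term V → Term V → Term V
  | lam {V : Type u} : Term (Option V) → Term V

namespace Term

/-- Renaming of (free) variables. -/
def map : {V : Type u} → {W : Type v} → (V → W) → Term V → Term W
  | _, _, f, var v => var (f v)
  | _, _, f, app M N => app (map f M) (map f N)
  | _, _, f, lam B => lam (map (Option.map f) B)

/-- Simultaneous (capture-avoiding) substitution. -/
def bind : {V : Type u} → {W : Type v} → (V → Term W) → Term V → Term W
  | _, _, f, var v => f v
  | _, _, f, app M N => app (bind f M) (bind f N)
  | _, _, f, lam B =>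
      lam (bind (fun o => Option.elim o (var none) (fun v => map some (f v))) B)

/-- The set of free variables of a term. -/
def fv : {V : Type u} → Term V → Set V
  | _, var v => {v}
  | _, app M N => fv M ∪ fv N
  | _, lam B => {v | some v ∈ fv B}

open Classical in
/-- Capture-avoiding substitution `M[v := N]`. -/
noncomputable def subst {V : Type u} (M : Term V) (v : V) (N : Term V) : Term V :=
  M.bind (fun u => if u = v then N else var u)

/-- Instantiation of the bound variable of the body of a λ-abstraction. -/
def instantiate {V : Type u} (B : Term (Option V)) (N : Term V) : Term V :=
  B.bind (fun o => Option.elim o N var)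

open Classical in
/-- λ-abstraction `λ v. M` over a named variable `v`. -/
noncomputable def abs {V : Type u} (v : V) (M : Term V) : Term V :=
  lam (M.map (fun u => if u = v then none else some u))

end Term

/-- A term is closed if it has no free variables. -/
def Closed {V : Type u} (M : Term V) : Prop := Term.fv M = ∅

/-- The β relation: `((λv.M)N, M[v := N])`. -/
def Beta {V : Type u} (M N : Term V) : Prop :=
  ∃ B P, M = Term.app (Term.lam B) P ∧ N = Term.instantiate B P

/-- The η relation: `((λv. M v), M)` with `v ∉ FV(M)`. -/
def Eta {V : Type u} (M N : Term V) : Prop :=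
  M = Term.lam (Term.app (N.map some) (Term.var none))

/-- The βη relation. -/
def BetaEta {V : Type u} (M N : Term V) : Prop := Beta M N ∨ Eta M N

/-- One-step `R`-reduction: the least compatible relation containing `R`. -/
inductive Step {V : Type u} (R : Term V → Term V → Prop) : Term V → Term V → Prop
  | base {M N : Term V} : R M N → Step R M N
  | appL {M M' N : Term V} : Step R M M' → Step R (Term.app M N) (Term.app M' N)
  | appR {M N N' : Term V} : Step R N N' → Step R (Term.app M N) (Term.app M N')
  | abs (v : V) {M M' : Term V} : Step R M M' → Step R (Term.abs v M) (Term.abs v M')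

/-- `R`-reduction `→→_R`: the least preorder containing one-step `R`-reduction. -/
def Red {V : Type u} (R : Term V → Term V → Prop) : Term V → Term V → Prop :=
  Relation.ReflTransGen (Step R)

/-- `R`-equivalence `≈_R`: the least equivalence relation containing `→_R`. -/
def REquiv {V : Type u} (R : Term V → Term V → Prop) : Term V → Term V → Prop :=
  Relation.EqvGen (Step R)

/-- A term is `R`-reduced if it admits no one-step `R`-reduction. -/
def Reduced {V : Type u} (R : Term V → Term V → Prop) (M : Term V) : Prop :=
  ¬ ∃ N, Step R M N

/-- `N` is an `R`-normal form of `M`. -/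
def IsNormalFormOf {V : Type u} (R : Term V → Term V → Prop) (M N : Term V) : Prop :=
  Reduced R N ∧ REquiv R M N

/-- The preorder `≤_R`. -/
def LeR {V : Type u} (R : Term V → Term V → Prop) (F G : Term V) : Prop :=
  ∀ N : Term V, Closed N → ∀ N' : Term V,
    IsNormalFormOf R (Term.app F N) N' → IsNormalFormOf R (Term.app G N) N'

/-- `R_{F,y} = R ∪ S_{F,y}` where `S_{F,y} = {(y, F y)}`. -/
def Rfy {V : Type u} (R : Term V → Term V → Prop) (F : Term V) (y : V) :
    Term V → Term V → Prop :=
  fun A B => R A B ∨ (A = Term.var y ∧ B = Term.app F (Term.var y))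

/-- Curry's fixed point combinator `Y = λf.(λg.f(gg))(λg.f(gg))`. -/
def Y {V : Type u} : Term V :=
  Term.lam (Term.app
    (Term.lam (Term.app (Term.var (some none))
      (Term.app (Term.var none) (Term.var none))))
    (Term.lam (Term.app (Term.var (some none))
      (Term.app (Term.var none) (Term.var none)))))

/-- `λg. M (g g)` with `g` fresh. -/
def halfY {V : Type u} (M : Term V) : Term V :=
  Term.lam (Term.app (M.map some) (Term.app (Term.var none) (Term.var none)))

/-- `Y_{M,N} = (λg. M (g g)) (λg. N (g g))` with `g ∉ FV(M) ∪ FV(N)`. -/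
def Ypair {V : Type u} (M N : Term V) : Term V := Term.app (halfY M) (halfY N)

/-- `M^{(n)} N`: `n`-fold application of `M` to `N`. -/
def iterApp {V : Type u} (M : Term V) : ℕ → Term V → Term V
  | 0, N => N
  | n + 1, N => Term.app M (iterApp M n N)

/-- `Y_n = λf. f^{(n)} Y_{f,f}`. -/
def Yn {V : Type u} (n : ℕ) : Term V :=
  Term.lam (iterApp (Term.var none) n (Ypair (Term.var none) (Term.var none)))

/-- `Υ_F = { Y_n F' : F →→_R F', n ≥ 0 } ∪ { Y_{F',F''} : F →→_R F', F →→_R F'' }`. -/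
def Upsilon {V : Type u} (R : Term V → Term V → Prop) (F : Term V) : Set (Term V) :=
  {M | ∃ (n : ℕ) (F' : Term V), Red R F F' ∧ M = Term.app (Yn n) F'} ∪
  {M | ∃ F' F'' : Term V, Red R F F' ∧ Red R F F'' ∧ M = Ypair F' F''}

/-- The extended variable set `Ṽ_F = V ∪ V'_F`, where `V'_F` is a set
disjoint from `V` in bijection with `Υ_F`. -/
def ExtV {V : Type u} (R : Term V → Term V → Prop) (F : Term V) : Type (u + 1) :=
  V ⊕ {K : Term V // K ∈ Upsilon R F}

/-- The realization map `ρ : Λ̃_F → Λ`, substituting `K` for each `v_K ∈ V'_F`. -/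
def realize {V : Type u} {R : Term V → Term V → Prop} {F : Term V} :
    Term (ExtV R F) → Term V :=
  Term.bind (Sum.elim Term.var (fun K => K.1))

/-- The flattening map `φ_y : Λ̃_F → Λ`, substituting `y` for every variable in `V'_F`. -/
def flatten {V : Type u} {R : Term V → Term V → Prop} {F : Term V} (y : V) :
    Term (ExtV R F) → Term V :=
  Term.bind (Sum.elim Term.var (fun _ => Term.var y))

/-- `λx.λy. y (x x y)`. -/
def thetaHalf {V : Type u} : Term V :=
  Term.lam (Term.lam (Term.app (Term.var none)
    (Term.app (Term.app (Term.var (some none)) (Term.var (some none)))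
      (Term.var none))))

/-- Turing's fixed point combinator `Θ = (λx.λy.y(xxy))(λx.λy.y(xxy))`. -/
def Theta {V : Type u} : Term V := Term.app thetaHalf thetaHalf


/-- `Υ'_F = { Θ' F' : Θ →→_R Θ', F →→_R F' }`. -/
def UpsilonTheta {V : Type u} (R : Term V → Term V → Prop) (F : Term V) :
    Set (Term V) :=
  {M | ∃ T' F' : Term V, Red R Theta T' ∧ Red R F F' ∧ M = Term.app T' F'}
/-!
Θ contracts to `λy. y (Θ y)`, and by induction on the reduction every reduct of Θ is
either Θ itself or `λy. y^{(m+1)} (T y)` with `T` again a reduct of Θ: a step inside such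
a term either contracts the redex `T y` (when `T` is itself unfolded, which just raises `m`)
or reduces inside `T`. Reducts of Θ are closed, so `T` never captures `y`. Hence a step
of `Θ' F'` either contracts the head redex, giving `F'^{(m+1)} (T F')` with `T F' ∈ Υ'_F`,
or takes place inside `Θ'` or `F'`, giving another element of `Υ'_F`.
-/

universe u v w

namespace Term

theorem map_map {V : Type u} {W : Type v} {X : Type w} (M : Term V) (f : V → W) (g : W → X) :
    (M.map f).map g = M.map (g ∘ f) := by
  induction M generalizing W X with
  | var v => rfl
  | app A B ihA ihB => simp only [map, ihA, ihB]
  | lam B ih => simp only [map, ih, Option.map_comp_map]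

theorem map_congr {V : Type u} {W : Type v} {M : Term V} {f g : V → W}
    (h : ∀ v ∈ M.fv, f v = g v) : M.map f = M.map g := by
  induction M generalizing W with
  | var v => simp [map, h v (by simp [fv])]
  | app A B ihA ihB =>
    simp only [map, ihA fun v hv => h v (Or.inl hv), ihB fun v hv => h v (Or.inr hv)]
  | lam B ih =>
    simp only [map]
    rw [ih]
    rintro (_ | v) hv
    · rfl
    · simp [h v hv]

theorem map_id {V : Type u} (M : Term V) : M.map id = M := by
  induction M with
  | var v => rfl
  | app A B ihA ihB => simp only [map, ihA, ihB]
  | lam B ih => simp only [map, Option.map_id, ih]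

theorem bind_map {V : Type u} {W : Type v} {X : Type w} (M : Term V) (f : V → W)
    (g : W → Term X) : (M.map f).bind g = M.bind (g ∘ f) := by
  induction M generalizing W X with
  | var v => rfl
  | app A B ihA ihB => simp only [map, bind, ihA, ihB]
  | lam B ih =>
    simp only [map, bind, ih]
    congr 2
    funext o
    cases o <;> rfl

theorem bind_eq_self {V : Type u} {M : Term V} {f : V → Term V} (h : ∀ v, f v = var v) :
    M.bind f = M := by
  induction M with
  | var v => exact h v
  | app A B ihA ihB => simp only [bind, ihA h, ihB h]
  | lam B ih =>
    simp only [bind]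
    rw [ih]
    rintro (_ | v)
    · rfl
    · simp only [Option.elim, h v]
      rfl

theorem fv_map {V : Type u} {W : Type v} (M : Term V) (f : V → W) :
    (M.map f).fv = f '' M.fv := by
  induction M generalizing W with
  | var v => simp [map, fv]
  | app A B ihA ihB => simp [map, fv, ihA, ihB, Set.image_union]
  | lam B ih =>
    ext w
    simp [map, fv, ih]

theorem fv_bind_subset {V : Type u} {W : Type v} (M : Term V) (f : V → Term W) :
    (M.bind f).fv ⊆ ⋃ v ∈ M.fv, (f v).fv := by
  induction M generalizing W with
  | var v => simp [bind, fv]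
  | app A B ihA ihB =>
    rintro w (hw | hw)
    · obtain ⟨v, hv, hw⟩ := Set.mem_iUnion₂.1 (ihA f hw)
      exact Set.mem_iUnion₂.2 ⟨v, Or.inl hv, hw⟩
    · obtain ⟨v, hv, hw⟩ := Set.mem_iUnion₂.1 (ihB f hw)
      exact Set.mem_iUnion₂.2 ⟨v, Or.inr hv, hw⟩
  | lam B ih =>
    intro w hw
    obtain ⟨_ | v, hv, hw⟩ := Set.mem_iUnion₂.1 (ih _ hw)
    · simp [fv] at hw
    · simp only [Option.elim, fv_map, Set.mem_image, Option.some.injEq, exists_eq_right] at hw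
      exact Set.mem_iUnion₂.2 ⟨v, hv, hw⟩

open Classical in
theorem fv_abs {V : Type u} (v : V) (M : Term V) : (abs v M).fv = M.fv \ {v} := by
  ext w
  simp only [abs, fv, fv_map, Set.mem_ofPred_eq, Set.mem_image, Set.mem_sdiff,
    Set.mem_singleton_iff]
  constructor
  · rintro ⟨u, hu, he⟩
    split_ifs at he with huv
    exact Option.some.inj he ▸ ⟨hu, huv⟩
  · rintro ⟨hw, hwv⟩
    exact ⟨w, hw, if_neg hwv⟩

open Classical in
theorem map_getD_map_abs {V : Type u} (v : V) (M : Term V) :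
    (M.map fun u => if u = v then none else some u).map (·.getD v) = M := by
  rw [map_map]
  conv_rhs => rw [← M.map_id]
  refine map_congr fun u _ => ?_
  by_cases h : u = v <;> simp [h]

theorem map_some_map_getD {V : Type u} (v : V) (M : Term V) :
    (M.map some).map (·.getD v) = M := by
  rw [map_map]
  exact M.map_id

theorem instantiate_map_some {V : Type u} (M N : Term V) : (M.map some).instantiate N = M := by
  rw [instantiate, bind_map]
  exact bind_eq_self fun _ => rfl

end Term

section IterApp

variable {V : Type u}

theorem map_iterApp {W : Type v} (f : V → W) (A : Term V) (n : ℕ) (B : Term V) :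
    (iterApp A n B).map f = iterApp (A.map f) n (B.map f) := by
  induction n with
  | zero => rfl
  | succ n ih => simp only [iterApp, Term.map, ih]

theorem instantiate_iterApp_var_none (n : ℕ) (B : Term (Option V)) (N : Term V) :
    (iterApp (Term.var none) n B).instantiate N = iterApp N n (B.instantiate N) := by
  induction n with
  | zero => rfl
  | succ n ih => exact congrArg (Term.app N) ih

theorem iterApp_iterApp (A : Term V) (m n : ℕ) (B : Term V) :
    iterApp A m (iterApp A n B) = iterApp A (m + n) B := by
  induction m with
  | zero => simp [iterApp]
  | succ m ih => rw [Nat.add_right_comm]; exact congrArg (Term.app A) ih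

end IterApp

namespace Step

variable {V : Type u} {R : Term V → Term V → Prop}

theorem not_var (hR : ∀ A B, R A B → BetaEta A B) {v : V} {N : Term V} :
    ¬ Step R (Term.var v) N := by
  intro h
  generalize hM : Term.var v = M at h
  cases h with
  | base hr => rcases hR _ _ hr with ⟨_, _, rfl, _⟩ | rfl <;> cases hM
  | appL => cases hM
  | appR => cases hM
  | abs => cases hM

theorem app_inv (hR : ∀ A B, R A B → BetaEta A B) {A B N : Term V}
    (h : Step R (Term.app A B) N) :
    (∃ C, A = Term.lam C ∧ N = C.instantiate B) ∨
      (∃ A', Step R A A' ∧ N = Term.app A' B) ∨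
      ∃ B', Step R B B' ∧ N = Term.app A B' := by
  generalize hM : Term.app A B = M at h
  cases h with
  | base hr =>
    rcases hR _ _ hr with ⟨C, P, rfl, rfl⟩ | rfl
    · cases hM
      exact Or.inl ⟨C, rfl, rfl⟩
    · cases hM
  | appL hs => cases hM; exact Or.inr (Or.inl ⟨_, hs, rfl⟩)
  | appR hs => cases hM; exact Or.inr (Or.inr ⟨_, hs, rfl⟩)
  | abs => cases hM

open Classical in
theorem lam_inv (hR : ∀ A B, R A B → BetaEta A B) {B : Term (Option V)} {N : Term V}
    (h : Step R (Term.lam B) N) :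
    B = Term.app (N.map some) (Term.var none) ∨
      ∃ v N', Step R (B.map (·.getD v)) N' ∧ N = Term.abs v N' := by
  generalize hM : Term.lam B = M at h
  cases h with
  | base hr =>
    rcases hR _ _ hr with ⟨_, _, rfl, _⟩ | rfl
    · cases hM
    · cases hM
      exact Or.inl rfl
  | appL => cases hM
  | appR => cases hM
  | abs v hs =>
    cases hM
    exact Or.inr ⟨v, _, by rwa [Term.map_getD_map_abs], rfl⟩

theorem var_app_inv (hR : ∀ A B, R A B → BetaEta A B) {v : V} {B N : Term V}
    (h : Step R (Term.app (Term.var v) B) N) :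
    ∃ B', Step R B B' ∧ N = Term.app (Term.var v) B' := by
  rcases app_inv hR h with ⟨_, hA, _⟩ | ⟨_, hs, _⟩ | hB
  · cases hA
  · exact absurd hs (not_var hR)
  · exact hB

theorem iterApp_var_inv (hR : ∀ A B, R A B → BetaEta A B) {v : V} {n : ℕ} {B N : Term V}
    (h : Step R (iterApp (Term.var v) n B) N) :
    ∃ B', Step R B B' ∧ N = iterApp (Term.var v) n B' := by
  induction n generalizing N with
  | zero => exact ⟨N, h, rfl⟩
  | succ n ih =>
    obtain ⟨B₁, hs, rfl⟩ := var_app_inv hR h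
    obtain ⟨B', hs', rfl⟩ := ih hs
    exact ⟨B', hs', rfl⟩

theorem fv_subset (hR : ∀ A B, R A B → BetaEta A B) {M N : Term V} (h : Step R M N) :
    N.fv ⊆ M.fv := by
  induction h with
  | base hr =>
    rcases hR _ _ hr with ⟨B, P, rfl, rfl⟩ | rfl
    · intro w hw
      obtain ⟨_ | u, hu, hw⟩ := Set.mem_iUnion₂.1 (Term.fv_bind_subset B _ hw)
      · exact Or.inr hw
      · exact Or.inl (by simpa [Term.fv] using hw ▸ hu)
    · intro w hw
      exact Or.inl (by simpa [Term.fv, Term.fv_map] using hw)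
  | appL _ ih => exact Set.union_subset_union_left _ ih
  | appR _ ih => exact Set.union_subset_union_right _ ih
  | abs v _ ih => simpa only [Term.fv_abs] using Set.sdiff_subset_sdiff_left ih

end Step

theorem Red.fv_subset {V : Type u} {R : Term V → Term V → Prop}
    (hR : ∀ A B, R A B → BetaEta A B) {M N : Term V} (h : Red R M N) : N.fv ⊆ M.fv := by
  induction h with
  | refl => rfl
  | tail _ hs ih => exact (Step.fv_subset hR hs).trans ih

section Theta

variable {V : Type u} {R : Term V → Term V → Prop}

theorem fv_Theta : (Theta : Term V).fv = ∅ := by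
  ext v
  simp [Theta, thetaHalf, Term.fv]

theorem fv_eq_empty_of_red_Theta (hR : ∀ A B, R A B → BetaEta A B) {T : Term V}
    (h : Red R Theta T) : T.fv = ∅ :=
  Set.subset_empty_iff.1 (fv_Theta ▸ h.fv_subset hR)

theorem thetaHalf_normal (hR : ∀ A B, R A B → BetaEta A B) {N : Term V} :
    ¬ Step R thetaHalf N := by
  intro h
  rcases Step.lam_inv hR h with hη | ⟨v, N₁, hs, -⟩
  · cases hη
  rcases Step.lam_inv hR hs with hη | ⟨w, N₂, hs, -⟩
  · simp only [Term.map, Term.app.injEq] at hη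
    cases hη.2
  obtain ⟨N₃, hs, -⟩ := Step.var_app_inv hR hs
  rcases Step.app_inv hR hs with ⟨_, hA, -⟩ | ⟨_, hs, -⟩ | ⟨_, hs, -⟩
  · cases hA
  · obtain ⟨_, hs, -⟩ := Step.var_app_inv hR hs
    exact Step.not_var hR hs
  · exact Step.not_var hR hs

def thetaUnfoldBody (m : ℕ) (T : Term V) : Term (Option V) :=
  iterApp (Term.var none) (m + 1) (Term.app (T.map some) (Term.var none))

/-- `λy. y^{(m+1)} (T y)`. -/
def thetaUnfold (m : ℕ) (T : Term V) : Term V := Term.lam (thetaUnfoldBody m T)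

theorem instantiate_thetaUnfoldBody (m : ℕ) (T N : Term V) :
    (thetaUnfoldBody m T).instantiate N = iterApp N (m + 1) (Term.app T N) := by
  rw [thetaUnfoldBody, instantiate_iterApp_var_none]
  exact congrArg (fun X => iterApp N (m + 1) (Term.app X N)) (Term.instantiate_map_some T N)

theorem map_getD_thetaUnfoldBody (v : V) (m : ℕ) (T : Term V) :
    (thetaUnfoldBody m T).map (·.getD v) =
      iterApp (Term.var v) (m + 1) (Term.app T (Term.var v)) := by
  simp only [thetaUnfoldBody, map_iterApp, Term.map, Term.map_some_map_getD, Option.getD_none]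

open Classical in
theorem abs_iterApp_eq_thetaUnfold {v : V} (m : ℕ) {T : Term V} (hT : T.fv = ∅) :
    Term.abs v (iterApp (Term.var v) (m + 1) (Term.app T (Term.var v))) = thetaUnfold m T := by
  have hT' : (T.map fun u => if u = v then none else some u) = T.map some :=
    Term.map_congr fun u hu => absurd (hT ▸ hu) (Set.notMem_empty u)
  simp [Term.abs, thetaUnfold, thetaUnfoldBody, map_iterApp, Term.map, hT']

inductive ThetaReduct (R : Term V → Term V → Prop) : Term V → Prop
  | theta : ThetaReduct R Theta
  | unfold (m : ℕ) {T : Term V} : ThetaReduct R T → Red R Theta T →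
      ThetaReduct R (thetaUnfold m T)

theorem ThetaReduct.step (hR : ∀ A B, R A B → BetaEta A B) {T U : Term V}
    (hT : ThetaReduct R T) (h : Step R T U) : ThetaReduct R U := by
  induction hT generalizing U with
  | theta =>
    rcases Step.app_inv hR h with ⟨C, hC, rfl⟩ | ⟨_, hs, -⟩ | ⟨_, hs, -⟩
    · cases hC
      exact .unfold 0 .theta .refl
    · exact absurd hs (thetaHalf_normal hR)
    · exact absurd hs (thetaHalf_normal hR)
  | unfold m hT hred ih =>
    rcases Step.lam_inv hR h with hη | ⟨v, N, hs, rfl⟩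
    · simp only [thetaUnfoldBody, iterApp, Term.app.injEq] at hη
      cases m <;> cases hη.2
    rw [map_getD_thetaUnfoldBody] at hs
    obtain ⟨X, hX, rfl⟩ := Step.iterApp_var_inv hR hs
    rcases Step.app_inv hR hX with ⟨C, hC, rfl⟩ | ⟨T', hT', rfl⟩ | ⟨_, hv, -⟩
    · cases hT with
      | theta => cases hC
      | unfold j hT₂ hred₂ =>
        cases hC
        rw [instantiate_thetaUnfoldBody, iterApp_iterApp,
          show m + 1 + (j + 1) = m + j + 1 + 1 by omega,
          abs_iterApp_eq_thetaUnfold _ (fv_eq_empty_of_red_Theta hR hred₂)]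
        exact .unfold _ hT₂ hred₂
    · rw [abs_iterApp_eq_thetaUnfold _ (fv_eq_empty_of_red_Theta hR (hred.tail hT'))]
      exact .unfold m (ih hT') (hred.tail hT')
    · exact absurd hv (Step.not_var hR)

theorem red_Theta_cases (hR : ∀ A B, R A B → BetaEta A B) {T : Term V} (h : Red R Theta T) :
    T = Theta ∨ ∃ m T', Red R Theta T' ∧ T = thetaUnfold m T' := by
  have hT : ThetaReduct R T := by
    induction h with
    | refl => exact .theta
    | tail _ hs ih => exact ih.step hR hs
  cases hT with
  | theta => exact Or.inl rfl
  | unfold m _ hred => exact Or.inr ⟨m, _, hred, rfl⟩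

end Theta

theorem upsilonTheta_step_general {V : Type}
    (R : Term V → Term V → Prop) (hR : R = @Beta V ∨ R = @BetaEta V)
    (F M M' : Term V) (hM : M ∈ UpsilonTheta R F) (h : Step R M M') :
    ∃ (F' : Term V) (n : ℕ) (N : Term V),
      Red R F F' ∧ N ∈ UpsilonTheta R F ∧ M' = iterApp F' n N := by
  have hsub : ∀ A B, R A B → BetaEta A B := by
    rcases hR with rfl | rfl
    exacts [fun _ _ => Or.inl, fun _ _ => id]
  obtain ⟨T, F', hT, hF', rfl⟩ := hM
  rcases Step.app_inv hsub h with ⟨C, hC, rfl⟩ | ⟨T', hs, rfl⟩ | ⟨F'', hs, rfl⟩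
  · rcases red_Theta_cases hsub hT with rfl | ⟨m, T', hT', rfl⟩
    · cases hC
    · cases hC
      exact ⟨F', m + 1, .app T' F', hF', ⟨T', F', hT', hF', rfl⟩,
        instantiate_thetaUnfoldBody m T' F'⟩
  · exact ⟨F', 0, .app T' F', hF', ⟨T', F', hT.tail hs, hF', rfl⟩, rfl⟩
  · exact ⟨F', 0, .app T F'', hF', ⟨T, F'', hT, hF'.tail hs, rfl⟩, rfl⟩

/-- Let `R` be β or βη and fix a λ-term `F`. If `M ∈ Υ'_F`
and `M →_R M'`, then `M' = (F')^{(n)} N` for some `F'` with `F →→_R F'`,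
some `N ∈ Υ'_F` and some `n ≥ 0`. -/
theorem upsilonTheta_step {V : Type} [Infinite V]
    (R : Term V → Term V → Prop) (hR : R = @Beta V ∨ R = @BetaEta V)
    (F M M' : Term V) (hM : M ∈ UpsilonTheta R F) (h : Step R M M') :
    ∃ (F' : Term V) (n : ℕ) (N : Term V),
      Red R F F' ∧ N ∈ UpsilonTheta R F ∧ M' = iterApp F' n N :=
  upsilonTheta_step_general R hR F M M' hM h
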